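/- Let x ∈ V with height m ≥ 1 and let S, S' ⊊ {0,...,n} be proper nonempty subsets with x + e(S) and x + e(S') both of height m − 1 (i.e., both moves decrease height). If S ≠ S' and neither S ⊆ S' nor S' ⊆ S and S ∪ S' ≠ {0,...,n}, then the four vertices x, x+e(S), x+e(S'), and x+e(S)+e(S') form a 4-cycle in G, i.e., consecutive pairs are adjacent; moreover x+e(S∩S') and x+e(S∪S') are each adjacent to all four vertices of this 4-cycle. -/

import Mathlib

open Finset

/-- The vertex set of the 1-skeleton of the Ã_n Coxeter complex:
integer vectors summing to zero with all pairwise coordinate differences divisible by n+1. -/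
def inV (n : ℕ) (x : Fin (n+1) → ℤ) : Prop :=
  (∑ i, x i = 0) ∧ ∀ i j, ((n : ℤ) + 1) ∣ x i - x j

/-- Maximum coordinate. -/
def maxC (n : ℕ) (x : Fin (n+1) → ℤ) : ℤ := univ.sup' univ_nonempty x

/-- Minimum coordinate. -/
def minC (n : ℕ) (x : Fin (n+1) → ℤ) : ℤ := univ.inf' univ_nonempty x

/-- An edge vector: coordinates sum to 0, pairwise differences divisible by n+1,
and max minus min equals n+1. -/
def isEdge (n : ℕ) (e : Fin (n+1) → ℤ) : Prop :=
  inV n e ∧ maxC n e - minC n e = (n : ℤ) + 1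

/-- Height of a vertex: (max − min)/(n+1). -/
def height (n : ℕ) (x : Fin (n+1) → ℤ) : ℤ :=
  (maxC n x - minC n x) / ((n : ℤ) + 1)

/-- The edge vector associated to a subset S: value n+1−|S| on S and −|S| off S. -/
def eVec (n : ℕ) (S : Finset (Fin (n+1))) : Fin (n+1) → ℤ :=
  fun i => if i ∈ S then (n : ℤ) + 1 - S.card else -(S.card : ℤ)

lemma inV_zero (n : ℕ) : inV n 0 := ⟨by simp, fun i j => by simp⟩

lemma maxC_neg (n : ℕ) (x : Fin (n+1) → ℤ) : maxC n (-x) = - minC n x := by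
  unfold maxC minC
  apply le_antisymm
  · apply Finset.sup'_le
    intro i hi
    have h1 : univ.inf' univ_nonempty x ≤ x i := Finset.inf'_le _ hi
    have h2 : (-x) i = -(x i) := rfl
    omega
  · obtain ⟨i, hi, h⟩ := Finset.exists_mem_eq_inf' (univ_nonempty) x
    rw [h]
    have h1 : (-x) i ≤ univ.sup' univ_nonempty (-x) := Finset.le_sup' (-x) hi
    have h2 : (-x) i = -(x i) := rfl
    omega

lemma minC_neg (n : ℕ) (x : Fin (n+1) → ℤ) : minC n (-x) = - maxC n x := by
  have := maxC_neg n (-x)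
  rw [neg_neg] at this
  unfold maxC minC at *
  omega

lemma isEdge_neg {n : ℕ} {e : Fin (n+1) → ℤ} (h : isEdge n e) : isEdge n (-e) := by
  obtain ⟨⟨h1, h2⟩, h3⟩ := h
  refine ⟨⟨by simp [h1], fun i j => by
    have h' : (-e) i - (-e) j = e j - e i := by
      simp only [Pi.neg_apply]; ring
    rw [h']; exact h2 j i⟩, ?_⟩
  rw [maxC_neg, minC_neg]
  omega

/-- The graph G on V with edge-vector adjacency. -/
def G (n : ℕ) : SimpleGraph {x : Fin (n+1) → ℤ // inV n x} where
  Adj x y := isEdge n (y.1 - x.1)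
  symm := ⟨by
    intro x y h
    have := isEdge_neg h
    rwa [neg_sub] at this⟩
  loopless := ⟨by
    intro x h
    obtain ⟨-, h3⟩ := h
    rw [sub_self] at h3
    simp [maxC, minC] at h3
    omega⟩

/-- Adjacency of raw vectors: difference is an edge vector. -/
def adjV (n : ℕ) (x y : Fin (n+1) → ℤ) : Prop := isEdge n (y - x)

/-! If a move `x ↦ x + e(S)` lowers the height, then `S` contains every coordinate where `x`
is minimal: off `S` the move lowers a minimal coordinate by `|S|` while lowering no coordinate
by more, so the spread `max − min` cannot shrink. Two height-decreasing moves therefore have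
`S ∩ S' ≠ ∅`, and then the differences between `x + e(S ∩ S')`, `x + e(S ∪ S')` and the four
vertices of the square are, up to sign, the edge vectors of the nonempty proper subsets
`S ∩ S'`, `S ∪ S'`, `S \ S'`, `S' \ S`, using `e(S) + e(S') = e(S ∩ S') + e(S ∪ S')`. -/

lemma sdiff_ne_univ_of_nonempty {α : Type*} [Fintype α] [DecidableEq α] {A B : Finset α}
    (hB : B.Nonempty) : A \ B ≠ univ :=
  fun h => hB.elim fun b hb => (mem_sdiff.1 (h ▸ mem_univ b)).2 hb

section EdgeVectors

variable {n : ℕ}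

lemma le_maxC (x : Fin (n+1) → ℤ) (i : Fin (n+1)) : x i ≤ maxC n x :=
  le_sup' x (mem_univ i)

lemma minC_le (x : Fin (n+1) → ℤ) (i : Fin (n+1)) : minC n x ≤ x i :=
  inf'_le x (mem_univ i)

lemma card_le_succ (S : Finset (Fin (n+1))) : (S.card : ℤ) ≤ n + 1 := by
  exact_mod_cast (card_le_univ S).trans_eq (Fintype.card_fin _)

lemma neg_card_le_eVec (S : Finset (Fin (n+1))) (i : Fin (n+1)) :
    -(S.card : ℤ) ≤ eVec n S i := by
  have := card_le_succ S
  unfold eVec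
  split <;> omega

lemma eVec_le_succ_sub_card (S : Finset (Fin (n+1))) (i : Fin (n+1)) :
    eVec n S i ≤ n + 1 - S.card := by
  unfold eVec
  split <;> omega

lemma sum_eVec (S : Finset (Fin (n+1))) : ∑ i, eVec n S i = 0 := by
  simp only [eVec, sum_ite, sum_const, filter_mem_eq_inter, univ_inter, filter_not,
    ← compl_eq_univ_sdiff, card_compl, Fintype.card_fin, nsmul_eq_mul]
  push_cast [card_le_univ S |>.trans_eq (Fintype.card_fin _)]
  ring

lemma inV_eVec (S : Finset (Fin (n+1))) : inV n (eVec n S) := by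
  refine ⟨sum_eVec S, fun i j => ?_⟩
  unfold eVec
  split_ifs
  · simp
  · exact ⟨1, by ring⟩
  · exact ⟨-1, by ring⟩
  · simp

lemma isEdge_eVec {S : Finset (Fin (n+1))} (hS : S.Nonempty) (hSu : S ≠ univ) :
    isEdge n (eVec n S) := by
  obtain ⟨a, ha⟩ := hS
  obtain ⟨b, hb⟩ := not_forall.1 (mt eq_univ_iff_forall.2 hSu)
  have hmax : maxC n (eVec n S) = n + 1 - S.card :=
    le_antisymm (sup'_le _ _ fun i _ => eVec_le_succ_sub_card S i)
      (by simpa [eVec, ha] using le_maxC (eVec n S) a)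
  have hmin : minC n (eVec n S) = -(S.card : ℤ) :=
    le_antisymm (by simpa [eVec, hb] using minC_le (eVec n S) b)
      (le_inf' _ _ fun i _ => neg_card_le_eVec S i)
  exact ⟨inV_eVec S, by rw [hmax, hmin]; ring⟩

lemma eVec_add_eVec (S T : Finset (Fin (n+1))) :
    eVec n S + eVec n T = eVec n (S ∩ T) + eVec n (S ∪ T) := by
  have := card_union_add_card_inter S T
  funext i
  simp only [Pi.add_apply, eVec, mem_union, mem_inter]
  by_cases hS : i ∈ S <;> by_cases hT : i ∈ T <;> simp [hS, hT] <;> omega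

lemma eVec_sub_eVec_inter (S T : Finset (Fin (n+1))) :
    eVec n S - eVec n (S ∩ T) = eVec n (S \ T) := by
  have := card_sdiff_add_card_inter S T
  funext i
  simp only [Pi.sub_apply, eVec, mem_inter, mem_sdiff]
  by_cases hS : i ∈ S <;> by_cases hT : i ∈ T <;> simp [hS, hT] <;> omega

lemma eVec_union_sub_eVec (S T : Finset (Fin (n+1))) :
    eVec n (S ∪ T) - eVec n S = eVec n (T \ S) := by
  rw [← eVec_sub_eVec_inter, inter_comm]
  linear_combination (eVec_add_eVec S T).symm

end EdgeVectors

section Adjacency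

variable {n : ℕ} {x y a b e : Fin (n+1) → ℤ}

lemma adjV_symm (h : adjV n x y) : adjV n y x := by
  simpa [adjV] using isEdge_neg h

lemma adjV_add_add (h : isEdge n (b - a)) : adjV n (x + a) (x + b) := by
  simpa [adjV] using h

lemma adjV_add_self (h : isEdge n e) : adjV n x (x + e) := by
  simpa [adjV] using h

variable {S T : Finset (Fin (n+1))}

lemma adjV_square (hST : ¬ S ⊆ T) (hTS : ¬ T ⊆ S) :
    adjV n x (x + eVec n S) ∧ adjV n (x + eVec n S) (x + eVec n S + eVec n T) ∧
      adjV n (x + eVec n T) (x + eVec n S + eVec n T) ∧ adjV n x (x + eVec n T) := by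
  have hS : S ≠ univ := fun h => hTS (h ▸ subset_univ T)
  have hT : T ≠ univ := fun h => hST (h ▸ subset_univ S)
  have eS := isEdge_eVec (sdiff_nonempty.2 hST |>.mono sdiff_subset) hS
  have eT := isEdge_eVec (sdiff_nonempty.2 hTS |>.mono sdiff_subset) hT
  refine ⟨adjV_add_self eS, adjV_add_self eT, ?_, adjV_add_self eT⟩
  rw [add_right_comm]
  exact adjV_add_self eS

lemma adjV_inter_union_square (hI : (S ∩ T).Nonempty) (hST : ¬ S ⊆ T) (hTS : ¬ T ⊆ S)
    (hU : S ∪ T ≠ univ) :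
    ∀ y ∈ ({x, x + eVec n S, x + eVec n T, x + eVec n S + eVec n T} : Set (Fin (n+1) → ℤ)),
      adjV n (x + eVec n (S ∩ T)) y ∧ adjV n (x + eVec n (S ∪ T)) y := by
  have hS := sdiff_nonempty.2 hST
  have hT := sdiff_nonempty.2 hTS
  have eI := isEdge_eVec hI fun h => hTS fun i _ => (mem_inter.1 (h ▸ mem_univ i)).1
  have eU := isEdge_eVec (hI.mono inter_subset_union) hU
  have eST := isEdge_eVec hS (sdiff_ne_univ_of_nonempty (hT.mono sdiff_subset))
  have eTS := isEdge_eVec hT (sdiff_ne_univ_of_nonempty (hS.mono sdiff_subset))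
  have hsum : x + eVec n S + eVec n T = x + eVec n (S ∩ T) + eVec n (S ∪ T) := by
    rw [add_assoc, eVec_add_eVec, ← add_assoc]
  rintro y (rfl | rfl | rfl | rfl)
  · exact ⟨adjV_symm (adjV_add_self eI), adjV_symm (adjV_add_self eU)⟩
  · refine ⟨adjV_add_add ?_, adjV_symm (adjV_add_add ?_)⟩
    · rwa [eVec_sub_eVec_inter]
    · rwa [eVec_union_sub_eVec]
  · refine ⟨adjV_add_add ?_, adjV_symm (adjV_add_add ?_)⟩
    · rwa [inter_comm, eVec_sub_eVec_inter]
    · rwa [union_comm, eVec_union_sub_eVec]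
  · rw [hsum]
    exact ⟨adjV_add_self eU, by rw [add_right_comm]; exact adjV_add_self eI⟩

end Adjacency

lemma mem_of_height_add_eVec_lt {n : ℕ} {x : Fin (n+1) → ℤ} {S : Finset (Fin (n+1))}
    (h : height n (x + eVec n S) < height n x) {i : Fin (n+1)} (hi : x i = minC n x) :
    i ∈ S := by
  by_contra hiS
  obtain ⟨j, -, hj⟩ := exists_mem_eq_sup' univ_nonempty x
  have hj : maxC n x = x j := hj
  have hmin : minC n (x + eVec n S) ≤ minC n x - S.card := by
    simpa [eVec, hiS, hi, sub_eq_add_neg] using minC_le (x + eVec n S) i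
  have hmax : maxC n x - S.card ≤ maxC n (x + eVec n S) := by
    have hle : x j + eVec n S j ≤ maxC n (x + eVec n S) := le_maxC (x + eVec n S) j
    have := neg_card_le_eVec S j
    omega
  refine h.not_ge (Int.ediv_le_ediv (by positivity) ?_)
  omega

theorem stmt15_general (n : ℕ) (x : Fin (n+1) → ℤ)
    (m : ℤ) (hm : height n x = m)
    (S S' : Finset (Fin (n+1)))
    (hdec : height n (x + eVec n S) = m - 1)
    (hdec' : height n (x + eVec n S') = m - 1)
    (h1 : ¬ S ⊆ S') (h2 : ¬ S' ⊆ S) (h3 : S ∪ S' ≠ univ) :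
    (adjV n x (x + eVec n S) ∧
     adjV n (x + eVec n S) (x + eVec n S + eVec n S') ∧
     adjV n (x + eVec n S') (x + eVec n S + eVec n S') ∧
     adjV n x (x + eVec n S')) ∧
    (∀ y ∈ ({x, x + eVec n S, x + eVec n S', x + eVec n S + eVec n S'} :
        Set (Fin (n+1) → ℤ)),
      adjV n (x + eVec n (S ∩ S')) y ∧ adjV n (x + eVec n (S ∪ S')) y) := by
  obtain ⟨i, -, hi⟩ := exists_mem_eq_inf' univ_nonempty x
  have hiS := mem_of_height_add_eVec_lt (S := S) (by omega) hi.symm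
  have hiS' := mem_of_height_add_eVec_lt (S := S') (by omega) hi.symm
  exact ⟨adjV_square h1 h2, adjV_inter_union_square ⟨i, mem_inter.2 ⟨hiS, hiS'⟩⟩ h1 h2 h3⟩

/-- two incomparable height-decreasing moves span a 4-cycle, and the
vertices x+e(S∩S') and x+e(S∪S') are adjacent to all four vertices of the 4-cycle. -/
theorem stmt15 (n : ℕ) (hn : 3 ≤ n) (x : Fin (n+1) → ℤ) (hx : inV n x)
    (m : ℤ) (hm : height n x = m) (hm1 : 1 ≤ m)
    (S S' : Finset (Fin (n+1)))
    (hS : S.Nonempty) (hSu : S ≠ univ) (hS' : S'.Nonempty) (hS'u : S' ≠ univ)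
    (hdec : height n (x + eVec n S) = m - 1)
    (hdec' : height n (x + eVec n S') = m - 1)
    (hne : S ≠ S') (h1 : ¬ S ⊆ S') (h2 : ¬ S' ⊆ S) (h3 : S ∪ S' ≠ univ) :
    (adjV n x (x + eVec n S) ∧
     adjV n (x + eVec n S) (x + eVec n S + eVec n S') ∧
     adjV n (x + eVec n S') (x + eVec n S + eVec n S') ∧
     adjV n x (x + eVec n S')) ∧
    (∀ y ∈ ({x, x + eVec n S, x + eVec n S', x + eVec n S + eVec n S'} :
        Set (Fin (n+1) → ℤ)),
      adjV n (x + eVec n (S ∩ S')) y ∧ adjV n (x + eVec n (S ∪ S')) y) :=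
  stmt15_general n x m hm S S' hdec hdec' h1 h2 h3
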